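/- arXiv:2006.15512 — 5 statements merged into one kernel-verified Lean document; each statement's English description precedes it below -/
import Mathlib

section
/- Let N be a tensor network and N' a partial contraction of N (i.e., there is a surjective function f : N → N' such that for every tensor A in N', the contraction of the preimage f⁻¹(A) equals A, where the preimages partition N and no index is shared between distinct preimage blocks except through the resulting tensors). Then the contraction of N' equals the contraction of N. -/
open scoped Classical

noncomputable section

/-- A tensor over a finite set of indices `idx`, with domains `D i` for each index.
Values are given as a function of total assignments, depending only on `idx`. -/
structure Tensor (Ind : Type) (D : Ind → Type) where
  idx : Finset Ind
  val : (∀ i, D i) → ℝ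
  depends : ∀ σ τ : (∀ i, D i), (∀ i ∈ idx, σ i = τ i) → val σ = val τ

namespace Tensor

variable {Ind : Type} {D : Ind → Type} [∀ i, Fintype (D i)]

/-- Override a total assignment `σ` on the indices in `I` using `ρ`. -/
def override (σ : ∀ i, D i) {I : Finset Ind} (ρ : ∀ i : I, D i) : ∀ i, D i :=
  fun i => if h : i ∈ I then ρ ⟨i, h⟩ else σ i

/-- Number of tensors of the network `A` in which index `i` appears. -/
def count {κ : Type} [Fintype κ] (A : κ → Tensor Ind D) (i : Ind) : ℕ :=
  (Finset.univ.filter fun k => i ∈ (A k).idx).card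

/-- A family of tensors is a tensor network if no index appears more than twice. -/
def IsNetwork {κ : Type} [Fintype κ] (A : κ → Tensor Ind D) : Prop :=
  ∀ i, count A i ≤ 2

/-- Bond indices: appearing in exactly two tensors. -/
def bonds {κ : Type} [Fintype κ] (A : κ → Tensor Ind D) : Finset Ind :=
  (Finset.univ.biUnion fun k => (A k).idx).filter fun i => count A i = 2

/-- Free indices: appearing in exactly one tensor. -/
def frees {κ : Type} [Fintype κ] (A : κ → Tensor Ind D) : Finset Ind :=
  (Finset.univ.biUnion fun k => (A k).idx).filter fun i => count A i = 1

/-- The contraction of a tensor network, as a function of total assignments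
(its value depends only on the free indices): sum over all assignments of the
bond indices of the product of the tensor entries. -/
def contract {κ : Type} [Fintype κ] (A : κ → Tensor Ind D) (σ : ∀ i, D i) : ℝ :=
  ∑ ρ : ∀ i : (bonds A : Finset Ind), D i, ∏ k, (A k).val (override σ ρ)


theorem mem_bonds_iff' {κ : Type} [Fintype κ] (A : κ → Tensor Ind D) (i : Ind) :
    i ∈ bonds A ↔ count A i = 2 := by
  constructor
  · intro h; exact (Finset.mem_filter.mp h).2
  · intro h
    refine Finset.mem_filter.mpr ⟨?_, h⟩
    have hne : (Finset.univ.filter fun k => i ∈ (A k).idx).Nonempty := by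
      rw [← Finset.card_pos]; rw [count] at h; omega
    obtain ⟨k, hk⟩ := hne
    exact Finset.mem_biUnion.mpr ⟨k, Finset.mem_univ k, (Finset.mem_filter.mp hk).2⟩

theorem mem_frees_iff' {κ : Type} [Fintype κ] (A : κ → Tensor Ind D) (i : Ind) :
    i ∈ frees A ↔ count A i = 1 := by
  constructor
  · intro h; exact (Finset.mem_filter.mp h).2
  · intro h
    refine Finset.mem_filter.mpr ⟨?_, h⟩
    have hne : (Finset.univ.filter fun k => i ∈ (A k).idx).Nonempty := by
      rw [← Finset.card_pos]; rw [count] at h; omega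
    obtain ⟨k, hk⟩ := hne
    exact Finset.mem_biUnion.mpr ⟨k, Finset.mem_univ k, (Finset.mem_filter.mp hk).2⟩

theorem count_fiberwise {κ κ' : Type} [Fintype κ] [Fintype κ'] (A : κ → Tensor Ind D)
    (f : κ → κ') (i : Ind) :
    ∑ j : κ', count (fun k : {k : κ // f k = j} => A k.val) i = count A i := by
  simp only [count, Finset.card_filter]
  exact Fintype.sum_fiberwise f (fun k => if i ∈ (A k).idx then (1:ℕ) else 0)

/-- The preimage block of `j` under `f`, as a family of tensors. -/
def block {κ κ' : Type} (N : κ → Tensor Ind D) (f : κ → κ') (j : κ') :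
    {k : κ // f k = j} → Tensor Ind D := fun k => N k.val

/-- Split an assignment of the bonds of `N` into an assignment of the bonds of `N'`
together with assignments of the bonds of each block. -/
def splitMap {κ κ' : Type} [Fintype κ] [Fintype κ']
    (N : κ → Tensor Ind D) (N' : κ' → Tensor Ind D) (f : κ → κ')
    (h1 : ∀ i ∈ bonds N', i ∈ bonds N)
    (h2 : ∀ (j : κ') (i : Ind), i ∈ bonds (block N f j) → i ∈ bonds N)
    (ρ : ∀ i : (bonds N : Finset Ind), D i) :
    (∀ i : (bonds N' : Finset Ind), D i) ×
      (∀ j : κ', ∀ i : (bonds (block N f j) : Finset Ind), D i) :=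
  (fun i => ρ ⟨i.1, h1 i.1 i.2⟩, fun j i => ρ ⟨i.1, h2 j i.1 i.2⟩)

end Tensor

/-- If `N'` is a partial contraction of `N` — witnessed by a surjective
map `f` from the tensors of `N` to those of `N'` such that each tensor of `N'` is the
contraction of its preimage block (with matching index set, namely the free indices of
the block) — then the contraction of `N'` equals the contraction of `N`. -/
theorem partial_contraction_contract_eq
    {Ind : Type} {D : Ind → Type} [∀ i, Fintype (D i)]
    {κ κ' : Type} [Fintype κ] [Fintype κ'] [Nonempty κ] [Nonempty κ']
    (N : κ → Tensor Ind D) (N' : κ' → Tensor Ind D)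
    (hN : Tensor.IsNetwork N) (hN' : Tensor.IsNetwork N')
    (f : κ → κ') (hf : Function.Surjective f)
    (hidx : ∀ j : κ', (N' j).idx = Tensor.frees (fun k : {k : κ // f k = j} => N k.val))
    (hval : ∀ (j : κ') (σ : ∀ i, D i),
      (N' j).val σ = Tensor.contract (fun k : {k : κ // f k = j} => N k.val) σ) :
    ∀ σ : ∀ i, D i, Tensor.contract N' σ = Tensor.contract N σ := by
  classical
  intro σ
  -- counting facts
  have hidx1 : ∀ (j : κ') (i : Ind),
      i ∈ (N' j).idx ↔ Tensor.count (Tensor.block N f j) i = 1 := by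
    intro j i; rw [hidx j]; exact Tensor.mem_frees_iff' _ i
  have hsum : ∀ i, ∑ j : κ', Tensor.count (Tensor.block N f j) i = Tensor.count N i :=
    fun i => Tensor.count_fiberwise N f i
  have hcnt' : ∀ i, Tensor.count N' i =
      (Finset.univ.filter fun j : κ' => Tensor.count (Tensor.block N f j) i = 1).card := by
    intro i
    rw [Tensor.count]
    congr 1
    apply Finset.filter_congr
    intro j _
    exact hidx1 j i
  have hle : ∀ (j : κ') i, Tensor.count (Tensor.block N f j) i ≤ Tensor.count N i := by
    intro j i; rw [← hsum i]
    exact Finset.single_le_sum (f := fun j : κ' => Tensor.count (Tensor.block N f j) i)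
      (fun _ _ => Nat.zero_le _) (Finset.mem_univ j)
  have hpair : ∀ (j j' : κ') i, j ≠ j' →
      Tensor.count (Tensor.block N f j) i + Tensor.count (Tensor.block N f j') i
        ≤ Tensor.count N i := by
    intro j j' i hne
    rw [← hsum i]
    have h1 : ∑ x ∈ ({j, j'} : Finset κ'), Tensor.count (Tensor.block N f x) i
        = Tensor.count (Tensor.block N f j) i + Tensor.count (Tensor.block N f j') i :=
      Finset.sum_pair hne
    rw [← h1]
    exact Finset.sum_le_sum_of_subset (Finset.subset_univ _)
  have hB'sub : ∀ i ∈ Tensor.bonds N', i ∈ Tensor.bonds N := by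
    intro i hi
    have h2 : Tensor.count N' i = 2 := (Tensor.mem_bonds_iff' N' i).mp hi
    rw [hcnt' i] at h2
    have h1lt : 1 < (Finset.univ.filter fun j : κ' =>
        Tensor.count (Tensor.block N f j) i = 1).card := by omega
    obtain ⟨j₁, hj₁, j₂, hj₂, hne⟩ := Finset.one_lt_card.mp h1lt
    have hc1 := (Finset.mem_filter.mp hj₁).2
    have hc2 := (Finset.mem_filter.mp hj₂).2
    have hp := hpair j₁ j₂ i hne
    have hn2 := hN i
    exact (Tensor.mem_bonds_iff' N i).mpr (by omega)
  have hBsub : ∀ (j : κ') (i : Ind), i ∈ Tensor.bonds (Tensor.block N f j) →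
      i ∈ Tensor.bonds N := by
    intro j i hi
    have h2 : Tensor.count (Tensor.block N f j) i = 2 := (Tensor.mem_bonds_iff' _ i).mp hi
    have h3 := hle j i
    have h4 := hN i
    exact (Tensor.mem_bonds_iff' N i).mpr (by omega)
  have hBother : ∀ (j j' : κ') i, j ≠ j' → i ∈ Tensor.bonds (Tensor.block N f j) →
      Tensor.count (Tensor.block N f j') i = 0 := by
    intro j j' i hne hi
    have h2 : Tensor.count (Tensor.block N f j) i = 2 := (Tensor.mem_bonds_iff' _ i).mp hi
    have h3 := hpair j j' i hne
    have h4 := hN i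
    omega
  have hdisjB' : ∀ (j : κ') (i : Ind), i ∈ Tensor.bonds (Tensor.block N f j) →
      i ∉ Tensor.bonds N' := by
    intro j i hi hi'
    have h2 : Tensor.count N' i = 2 := (Tensor.mem_bonds_iff' N' i).mp hi'
    rw [hcnt' i] at h2
    have h1lt : 1 < (Finset.univ.filter fun j : κ' =>
        Tensor.count (Tensor.block N f j) i = 1).card := by omega
    obtain ⟨j₁, hj₁, j₂, hj₂, hne⟩ := Finset.one_lt_card.mp h1lt
    have hc1 := (Finset.mem_filter.mp hj₁).2
    have hc2 := (Finset.mem_filter.mp hj₂).2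
    rcases eq_or_ne j₁ j with rfl | h
    · have := hBother j₁ j₂ i hne hi; omega
    · have := hBother j j₁ i (Ne.symm h) hi; omega
  have hBBdisj : ∀ (j j' : κ') (i : Ind), j ≠ j' → i ∈ Tensor.bonds (Tensor.block N f j) →
      i ∉ Tensor.bonds (Tensor.block N f j') := by
    intro j j' i hne hi hi'
    have h1 := hBother j j' i hne hi
    have h2 := (Tensor.mem_bonds_iff' _ i).mp hi'
    omega
  have hcover : ∀ i ∈ Tensor.bonds N, i ∉ Tensor.bonds N' →
      ∃ j, i ∈ Tensor.bonds (Tensor.block N f j) := by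
    intro i hi hi'
    by_contra hno
    push_neg at hno
    have hall : ∀ j : κ', Tensor.count (Tensor.block N f j) i ≤ 1 := by
      intro j
      have h2 := hle j i
      have hN2 := hN i
      have h3 : Tensor.count (Tensor.block N f j) i ≠ 2 :=
        fun h => hno j ((Tensor.mem_bonds_iff' _ i).mpr h)
      omega
    have hNi : Tensor.count N i = 2 := (Tensor.mem_bonds_iff' N i).mp hi
    have hstep : ∑ j : κ', Tensor.count (Tensor.block N f j) i
        = ∑ j : κ', (if Tensor.count (Tensor.block N f j) i = 1 then 1 else 0) := by
      apply Finset.sum_congr rfl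
      intro j _
      have := hall j
      split <;> omega
    have h5 : Tensor.count N' i = 2 := by
      rw [hcnt' i, Finset.card_filter, ← hstep, hsum i, hNi]
    exact hi' ((Tensor.mem_bonds_iff' N' i).mpr h5)
  have hcoverk : ∀ (k : κ) (i : Ind), i ∈ (N k).idx → i ∈ Tensor.bonds N →
      i ∉ Tensor.bonds N' → i ∈ Tensor.bonds (Tensor.block N f (f k)) := by
    intro k i hik hi hi'
    obtain ⟨j, hj⟩ := hcover i hi hi'
    rcases eq_or_ne j (f k) with rfl | h
    · exact hj
    · exfalso
      have h0 := hBother j (f k) i h hj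
      have h1 : 0 < Tensor.count (Tensor.block N f (f k)) i := by
        rw [Tensor.count, Finset.card_pos]
        exact ⟨⟨k, rfl⟩, Finset.mem_filter.mpr ⟨Finset.mem_univ _, hik⟩⟩
      omega
  -- the splitting map and its bijectivity
  have hbij : Function.Bijective (Tensor.splitMap N N' f hB'sub hBsub) := by
    constructor
    · intro ρ₁ ρ₂ h
      rw [Prod.ext_iff] at h
      funext i
      by_cases hB' : (i : Ind) ∈ Tensor.bonds N'
      · have h2 : ρ₁ ⟨i.1, hB'sub i.1 hB'⟩ = ρ₂ ⟨i.1, hB'sub i.1 hB'⟩ :=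
          congrFun h.1 ⟨i.1, hB'⟩
        have h3 : (⟨i.1, hB'sub i.1 hB'⟩ : {x // x ∈ Tensor.bonds N}) = i := Subtype.ext rfl
        rwa [h3] at h2
      · obtain ⟨j, hj⟩ := hcover i.1 i.2 hB'
        have h2 : ρ₁ ⟨i.1, hBsub j i.1 hj⟩ = ρ₂ ⟨i.1, hBsub j i.1 hj⟩ :=
          congrFun (congrFun h.2 j) ⟨i.1, hj⟩
        have h3 : (⟨i.1, hBsub j i.1 hj⟩ : {x // x ∈ Tensor.bonds N}) = i := Subtype.ext rfl
        rwa [h3] at h2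
    · rintro ⟨ρ', g⟩
      refine ⟨fun i => if h : (i : Ind) ∈ Tensor.bonds N' then ρ' ⟨i.1, h⟩
        else g (hcover i.1 i.2 h).choose ⟨i.1, (hcover i.1 i.2 h).choose_spec⟩, ?_⟩
      refine Prod.ext ?_ ?_
      · funext i
        exact dif_pos i.2
      · funext j i
        have hnB' : (i : Ind) ∉ Tensor.bonds N' := hdisjB' j i.1 i.2
        have hc : (hcover i.1 (hBsub j i.1 i.2) hnB').choose = j := by
          by_contra hne
          exact hBBdisj _ j i.1 hne (hcover i.1 (hBsub j i.1 i.2) hnB').choose_spec i.2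
        have haux : ∀ (j' : κ') (hsp : (i : Ind) ∈ Tensor.bonds (Tensor.block N f j'))
            (h' : j' = j), g j' ⟨i.1, hsp⟩ = g j i := by
          rintro j' hsp rfl
          rfl
        exact (dif_neg hnB').trans (haux _ _ hc)
  -- compatibility of the summands
  have hcomp : ∀ ρ : ∀ i : (Tensor.bonds N : Finset Ind), D i,
      (∏ k : κ, (N k).val (Tensor.override σ ρ))
      = ∏ j : κ', ∏ k : {k : κ // f k = j},
          (Tensor.block N f j k).val
            (Tensor.override (Tensor.override σ (Tensor.splitMap N N' f hB'sub hBsub ρ).1)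
              ((Tensor.splitMap N N' f hB'sub hBsub ρ).2 j)) := by
    intro ρ
    rw [← Fintype.prod_fiberwise f fun k => (N k).val (Tensor.override σ ρ)]
    apply Finset.prod_congr rfl
    intro j _
    apply Finset.prod_congr rfl
    intro k _
    apply (N k.val).depends
    intro i hik
    unfold Tensor.override Tensor.splitMap
    by_cases hBj : i ∈ Tensor.bonds (Tensor.block N f j)
    · rw [dif_pos hBj, dif_pos (hBsub j i hBj)]
    · rw [dif_neg hBj]
      by_cases hB' : i ∈ Tensor.bonds N'
      · rw [dif_pos hB', dif_pos (hB'sub i hB')]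
      · have hnb : i ∉ Tensor.bonds N := by
          intro hb
          have h3 := hcoverk k.val i hik hb hB'
          rw [k.2] at h3
          exact hBj h3
        rw [dif_neg hB', dif_neg hnb]
  -- the per-row expansion
  have key : ∀ ρ' : ∀ i : (Tensor.bonds N' : Finset Ind), D i,
      (∏ j : κ', (N' j).val (Tensor.override σ ρ'))
      = ∑ g : ∀ j : κ', ∀ i : (Tensor.bonds (Tensor.block N f j) : Finset Ind), D i,
          ∏ j : κ', ∏ k : {k : κ // f k = j},
            (Tensor.block N f j k).val (Tensor.override (Tensor.override σ ρ') (g j)) := by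
    intro ρ'
    have h1 : ∀ j : κ', (N' j).val (Tensor.override σ ρ')
        = ∑ ρj : ∀ i : (Tensor.bonds (Tensor.block N f j) : Finset Ind), D i,
            ∏ k : {k : κ // f k = j},
              (Tensor.block N f j k).val (Tensor.override (Tensor.override σ ρ') ρj) :=
      fun j => hval j _
    calc (∏ j : κ', (N' j).val (Tensor.override σ ρ'))
        = ∏ j : κ', ∑ ρj : ∀ i : (Tensor.bonds (Tensor.block N f j) : Finset Ind), D i,
            ∏ k : {k : κ // f k = j},
              (Tensor.block N f j k).val (Tensor.override (Tensor.override σ ρ') ρj) :=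
          Finset.prod_congr rfl fun j _ => h1 j
      _ = ∑ g ∈ Fintype.piFinset (fun j : κ' =>
              (Finset.univ : Finset (∀ i : (Tensor.bonds (Tensor.block N f j) : Finset Ind), D i))),
            ∏ j : κ', ∏ k : {k : κ // f k = j},
              (Tensor.block N f j k).val (Tensor.override (Tensor.override σ ρ') (g j)) :=
          Finset.prod_univ_sum _ _
      _ = _ := by rw [Fintype.piFinset_univ]
  -- assemble
  unfold Tensor.contract
  calc (∑ ρ' : ∀ i : (Tensor.bonds N' : Finset Ind), D i,
          ∏ j : κ', (N' j).val (Tensor.override σ ρ'))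
      = ∑ ρ' : ∀ i : (Tensor.bonds N' : Finset Ind), D i,
          ∑ g : ∀ j : κ', ∀ i : (Tensor.bonds (Tensor.block N f j) : Finset Ind), D i,
            ∏ j : κ', ∏ k : {k : κ // f k = j},
              (Tensor.block N f j k).val (Tensor.override (Tensor.override σ ρ') (g j)) :=
        Finset.sum_congr rfl fun ρ' _ => key ρ'
    _ = ∑ p : (∀ i : (Tensor.bonds N' : Finset Ind), D i) ×
            (∀ j : κ', ∀ i : (Tensor.bonds (Tensor.block N f j) : Finset Ind), D i),
          ∏ j : κ', ∏ k : {k : κ // f k = j},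
            (Tensor.block N f j k).val (Tensor.override (Tensor.override σ p.1) (p.2 j)) := by
        exact (Fintype.sum_prod_type (fun p : (∀ i : (Tensor.bonds N' : Finset Ind), D i) ×
            (∀ j : κ', ∀ i : (Tensor.bonds (Tensor.block N f j) : Finset Ind), D i) =>
          ∏ j : κ', ∏ k : {k : κ // f k = j},
            (Tensor.block N f j k).val
              (Tensor.override (Tensor.override σ p.1) (p.2 j)))).symm
    _ = ∑ ρ : ∀ i : (Tensor.bonds N : Finset Ind), D i,
          ∏ k : κ, (N k).val (Tensor.override σ ρ) :=
        (Fintype.sum_bijective (Tensor.splitMap N N' f hB'sub hBsub) hbij _ _ hcomp).symm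
end
end

section
/- Tensor contraction is associative in the following sense: if {A, B, C} is a tensor network (no index appears more than twice among A, B, C), then (A · B) · C = A · (B · C), and both equal the contraction of the tensor network {A, B, C}. -/
open scoped Classical

noncomputable section

/-- The binary contraction `A · B` of two tensors: indices are the symmetric
difference of the index sets, values sum over assignments of the shared indices. -/
def Tensor.binContract {Ind : Type} {D : Ind → Type} [∀ i, Fintype (D i)]
    (A B : Tensor Ind D) : Tensor Ind D where
  idx := (A.idx \ B.idx) ∪ (B.idx \ A.idx)
  val σ := ∑ ρ : ∀ i : (A.idx ∩ B.idx : Finset Ind), D i,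
      A.val (Tensor.override σ ρ) * B.val (Tensor.override σ ρ)
  depends σ τ h := by
    refine Finset.sum_congr rfl fun ρ _ => ?_
    have hA : A.val (Tensor.override σ ρ) = A.val (Tensor.override τ ρ) := by
      refine A.depends _ _ fun i hi => ?_
      unfold Tensor.override
      by_cases hI : i ∈ A.idx ∩ B.idx
      · simp [hI]
      · simp only [dif_neg hI]
        exact h i (Finset.mem_union.mpr (Or.inl (Finset.mem_sdiff.mpr
          ⟨hi, fun hB => hI (Finset.mem_inter.mpr ⟨hi, hB⟩)⟩)))
    have hB : B.val (Tensor.override σ ρ) = B.val (Tensor.override τ ρ) := by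
      refine B.depends _ _ fun i hi => ?_
      unfold Tensor.override
      by_cases hI : i ∈ A.idx ∩ B.idx
      · simp [hI]
      · simp only [dif_neg hI]
        exact h i (Finset.mem_union.mpr (Or.inr (Finset.mem_sdiff.mpr
          ⟨hi, fun hA' => hI (Finset.mem_inter.mpr ⟨hA', hi⟩)⟩)))
    rw [hA, hB]

/-! The network condition says exactly that no index lies in all three tensors, so the three
pairwise intersections `A ∩ B`, `A ∩ C`, `B ∩ C` are disjoint. Summing out `(A ∆ B) ∩ C` after
`A ∩ B` is then summing out their union, the bond set, of the triple product; this computes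
`(A · B) · C`, and by commutativity also `A · (B · C) = (B · C) · A`. An index in exactly one
of the tensors is one in an odd number of them, i.e. in `(A ∆ B) ∆ C`. -/

open scoped symmDiff

namespace Tensor

section Indices

variable {Ind : Type} {D : Ind → Type}

theorem ext {T S : Tensor Ind D} (hidx : T.idx = S.idx) (hval : T.val = S.val) : T = S := by
  cases T
  cases S
  subst hidx hval
  rfl

theorem val_override_of_disjoint (T : Tensor Ind D) (σ : ∀ i, D i) {I : Finset Ind}
    (ρ : ∀ i : I, D i) (h : Disjoint T.idx I) : T.val (override σ ρ) = T.val σ :=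
  T.depends _ _ fun _ hi => dif_neg (Finset.disjoint_left.mp h hi)

theorem mem_biUnion_idx_of_count_pos {κ : Type} [Fintype κ] {A : κ → Tensor Ind D} {i : Ind}
    (h : 0 < count A i) : i ∈ Finset.univ.biUnion fun k => (A k).idx := by
  obtain ⟨k, hk⟩ := Finset.card_pos.mp h
  exact Finset.mem_biUnion.mpr ⟨k, Finset.mem_univ k, (Finset.mem_filter.mp hk).2⟩

theorem mem_bonds {κ : Type} [Fintype κ] {A : κ → Tensor Ind D} {i : Ind} :
    i ∈ bonds A ↔ count A i = 2 := by
  rw [bonds, Finset.mem_filter, and_iff_right_iff_imp]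
  intro h
  exact mem_biUnion_idx_of_count_pos (by omega)

theorem mem_frees {κ : Type} [Fintype κ] {A : κ → Tensor Ind D} {i : Ind} :
    i ∈ frees A ↔ count A i = 1 := by
  rw [frees, Finset.mem_filter, and_iff_right_iff_imp]
  intro h
  exact mem_biUnion_idx_of_count_pos (by omega)

variable (A B C : Tensor Ind D)

theorem count_fin_three (i : Ind) :
    count ![A, B, C] i
      = (if i ∈ A.idx then 1 else 0) + (if i ∈ B.idx then 1 else 0)
        + (if i ∈ C.idx then 1 else 0) := by
  rw [count, Finset.card_filter, Fin.sum_univ_three]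
  rfl

theorem isNetwork_fin_three_iff :
    IsNetwork ![A, B, C] ↔ Disjoint (A.idx ∩ B.idx) C.idx := by
  simp only [IsNetwork, count_fin_three, Finset.disjoint_left, Finset.mem_inter, and_imp]
  refine forall_congr' fun i => ?_
  by_cases hA : i ∈ A.idx <;> by_cases hB : i ∈ B.idx <;> by_cases hC : i ∈ C.idx <;>
    simp [hA, hB, hC]

variable {A B C}

theorem frees_fin_three (h : Disjoint (A.idx ∩ B.idx) C.idx) :
    frees ![A, B, C] = A.idx ∆ B.idx ∆ C.idx := by
  ext i
  have hABC : i ∈ A.idx ∩ B.idx → i ∉ C.idx := fun hi => Finset.disjoint_left.mp h hi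
  rw [mem_frees, count_fin_three]
  by_cases hA : i ∈ A.idx <;> by_cases hB : i ∈ B.idx <;> by_cases hC : i ∈ C.idx <;>
    simp_all [Finset.mem_symmDiff]

theorem bonds_fin_three (h : Disjoint (A.idx ∩ B.idx) C.idx) :
    bonds ![A, B, C] = A.idx ∩ B.idx ∪ A.idx ∩ C.idx ∪ B.idx ∩ C.idx := by
  ext i
  have hABC : i ∈ A.idx ∩ B.idx → i ∉ C.idx := fun hi => Finset.disjoint_left.mp h hi
  rw [mem_bonds, count_fin_three]
  by_cases hA : i ∈ A.idx <;> by_cases hB : i ∈ B.idx <;> by_cases hC : i ∈ C.idx <;>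
    simp_all

end Indices

section Contraction

variable {Ind : Type} {D : Ind → Type} [∀ i, Fintype (D i)]

def sumOut (I : Finset Ind) (g : (∀ i, D i) → ℝ) (σ : ∀ i, D i) : ℝ :=
  ∑ ρ : ∀ i : I, D i, g (override σ ρ)

theorem sumOut_union {I J : Finset Ind} (h : Disjoint I J) (g : (∀ i, D i) → ℝ)
    (σ : ∀ i, D i) : sumOut (I ∪ J) g σ = sumOut I (sumOut J g) σ := by
  rw [sumOut, ← (Equiv.piFinsetUnion D h).sum_comp, Fintype.sum_prod_type]
  exact Finset.sum_congr rfl fun ρ _ => Finset.sum_congr rfl fun π _ =>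
    congrArg g (Function.updateFinset_updateFinset h).symm

theorem sumOut_mul_right (T : Tensor Ind D) {I : Finset Ind} (h : Disjoint T.idx I)
    (g : (∀ i, D i) → ℝ) (σ : ∀ i, D i) :
    sumOut I (fun τ => g τ * T.val τ) σ = sumOut I g σ * T.val σ := by
  simp only [sumOut, val_override_of_disjoint T σ _ h, Finset.sum_mul]

theorem binContract_idx (A B : Tensor Ind D) : (A.binContract B).idx = A.idx ∆ B.idx := rfl

theorem binContract_val (A B : Tensor Ind D) (σ : ∀ i, D i) :
    (A.binContract B).val σ = sumOut (A.idx ∩ B.idx) (fun τ => A.val τ * B.val τ) σ := rfl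

theorem contract_eq_sumOut {κ : Type} [Fintype κ] (A : κ → Tensor Ind D) (σ : ∀ i, D i) :
    contract A σ = sumOut (bonds A) (fun τ => ∏ k, (A k).val τ) σ := rfl

theorem binContract_comm (A B : Tensor Ind D) : A.binContract B = B.binContract A :=
  ext (symmDiff_comm _ _) <| funext fun σ => by
    simp only [binContract_val, Finset.inter_comm A.idx, mul_comm (A.val _)]

theorem val_binContract_binContract {A B C : Tensor Ind D} (h : Disjoint (A.idx ∩ B.idx) C.idx)
    (σ : ∀ i, D i) :
    ((A.binContract B).binContract C).val σ
      = sumOut (A.idx ∩ B.idx ∪ A.idx ∩ C.idx ∪ B.idx ∩ C.idx)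
          (fun τ => A.val τ * B.val τ * C.val τ) σ := by
  have hAB_C : A.idx ∆ B.idx ∩ C.idx = A.idx ∩ C.idx ∪ B.idx ∩ C.idx := by
    ext i
    have hABC : i ∈ A.idx ∩ B.idx → i ∉ C.idx := fun hi => Finset.disjoint_left.mp h hi
    simp only [Finset.mem_inter, Finset.mem_union, Finset.mem_symmDiff] at hABC ⊢
    tauto
  have hdisj : Disjoint (A.idx ∩ C.idx ∪ B.idx ∩ C.idx) (A.idx ∩ B.idx) :=
    h.symm.mono_left (Finset.union_subset Finset.inter_subset_right Finset.inter_subset_right)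
  calc ((A.binContract B).binContract C).val σ
      = sumOut (A.idx ∩ C.idx ∪ B.idx ∩ C.idx)
          (fun τ => sumOut (A.idx ∩ B.idx) (fun τ => A.val τ * B.val τ) τ * C.val τ) σ := by
        rw [binContract_val, binContract_idx, hAB_C]
        rfl
    _ = sumOut (A.idx ∩ C.idx ∪ B.idx ∩ C.idx)
          (sumOut (A.idx ∩ B.idx) fun τ => A.val τ * B.val τ * C.val τ) σ := by
        congr 1
        funext τ
        exact (sumOut_mul_right C h.symm _ τ).symm
    _ = _ := by
        rw [← sumOut_union hdisj, Finset.union_comm, Finset.union_assoc]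

end Contraction

end Tensor

/-- binary tensor contraction is associative on tensor networks: if
`{A, B, C}` is a tensor network (no index appears more than twice), then
`(A · B) · C = A · (B · C)` and both equal the contraction of the network `{A, B, C}`
(whose index set is the set of free indices). -/
theorem binContract_assoc
    {Ind : Type} {D : Ind → Type} [∀ i, Fintype (D i)]
    (A B C : Tensor Ind D)
    (hnet : Tensor.IsNetwork ![A, B, C]) :
    Tensor.binContract (Tensor.binContract A B) C
        = Tensor.binContract A (Tensor.binContract B C)
      ∧ (Tensor.binContract (Tensor.binContract A B) C).idx = Tensor.frees ![A, B, C]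
      ∧ ∀ σ : ∀ i, D i,
          (Tensor.binContract (Tensor.binContract A B) C).val σ
            = Tensor.contract ![A, B, C] σ := by
  have h : Disjoint (A.idx ∩ B.idx) C.idx := (Tensor.isNetwork_fin_three_iff A B C).mp hnet
  have h' : Disjoint (B.idx ∩ C.idx) A.idx := (disjoint_assoc.mp h).symm
  refine ⟨Tensor.ext (symmDiff_assoc _ _ _) (funext fun σ => ?_), (Tensor.frees_fin_three h).symm,
    fun σ => ?_⟩
  · rw [Tensor.binContract_comm A (B.binContract C), Tensor.val_binContract_binContract h,
      Tensor.val_binContract_binContract h']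
    congr 1
    · ext i
      simp only [Finset.mem_union, Finset.mem_inter]
      tauto
    · funext τ
      ring
  · rw [Tensor.val_binContract_binContract h, Tensor.contract_eq_sumOut, Tensor.bonds_fin_three h]
    congr 1
    funext τ
    rw [Fin.prod_univ_three]
    rfl
end
end

section
/- If a formula φ in CNF has a primal graph of treewidth k, then the incidence graph of φ has treewidth at most k + 1. -/
open scoped Classical

noncomputable section

/-- A literal is a variable paired with a polarity; a clause is a finite set of
literals; a CNF formula is a finite set of clauses. -/
abbrev Clause (V : Type) := Finset (V × Bool)

/-- An assignment satisfies a clause if some literal of the clause is satisfied. -/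
def SatClause {V : Type} (t : V → Bool) (C : Clause V) : Prop :=
  ∃ l ∈ C, t l.1 = l.2

/-- An assignment satisfies a CNF formula if it satisfies every clause. -/
def SatCNF {V : Type} (t : V → Bool) (phi : Finset (Clause V)) : Prop :=
  ∀ C ∈ phi, SatClause t C

/-- The literal-weighted model count of a CNF formula `phi` over variables `V` with
weight function `W`. -/
def weightedModelCount {V : Type} [Fintype V]
    (phi : Finset (Clause V)) (W : V → Bool → ℝ) : ℝ :=
  ∑ t : V → Bool, (if SatCNF t phi then (1 : ℝ) else 0) * ∏ x : V, W x (t x)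

/-- Variable `x` occurs (positively or negatively) in clause `C`. -/
def Occurs {V : Type} (x : V) (C : Clause V) : Prop :=
  (x, true) ∈ C ∨ (x, false) ∈ C

/-- The primal graph of a CNF formula: vertices are the variables, with an edge between
two variables whenever they occur together in some clause. -/
def primalGraph {V : Type} (phi : Finset (Clause V)) : SimpleGraph V :=
  SimpleGraph.fromRel fun x y => ∃ C ∈ phi, Occurs x C ∧ Occurs y C

/-- The incidence graph of a CNF formula: the bipartite graph on variables and clauses,
with an edge between a variable and a clause whenever the variable occurs in it. -/
def incidenceGraph {V : Type} (phi : Finset (Clause V)) :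
    SimpleGraph (V ⊕ {C : Clause V // C ∈ phi}) :=
  SimpleGraph.fromRel fun a b =>
    ∃ x c, a = Sum.inl x ∧ b = Sum.inr c ∧ Occurs x c.val

/-- A tree decomposition of a graph `G`: a tree `tree` with bags of vertices of `G`
attached to its nodes, covering all vertices and edges, such that for each vertex `v`
of `G` the set of tree nodes whose bag contains `v` induces a connected subtree. -/
structure TreeDecomp {V : Type} (G : SimpleGraph V) where
  τ : Type
  tree : SimpleGraph τ
  isTree : tree.IsTree
  bag : τ → Finset V
  bag_vertex : ∀ v : V, ∃ t, v ∈ bag t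
  bag_edge : ∀ ⦃u v : V⦄, G.Adj u v → ∃ t, u ∈ bag t ∧ v ∈ bag t
  bag_connected : ∀ v : V, (tree.induce {t | v ∈ bag t}).Connected

/-- A tree decomposition has width at most `w` if every bag has at most `w + 1`
vertices. -/
def TreeDecomp.widthLE {V : Type} {G : SimpleGraph V} (T : TreeDecomp G) (w : ℕ) :
    Prop :=
  ∀ t, (T.bag t).card ≤ w + 1

/-- A branch decomposition of a graph `G`: a tree whose leaves (vertices with a unique
neighbor) are in bijection with the edges of `G`. -/
structure BranchDecomp {V : Type} (G : SimpleGraph V) where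
  τ : Type
  tree : SimpleGraph τ
  isTree : tree.IsTree
  leafEquiv : G.edgeSet ≃ {t : τ // ∃! s, tree.Adj t s}

namespace BranchDecomp

variable {V : Type} {G : SimpleGraph V}

/-- The set of edges of `G` whose leaves end up on the side of `t₁` after removing the
tree edge `{t₁, t₂}`. -/
def side (B : BranchDecomp G) (t₁ t₂ : B.τ) : Set G.edgeSet :=
  {e | (B.tree.deleteEdges {s(t₁, t₂)}).Reachable (B.leafEquiv e).val t₁}

/-- The separator of a tree edge `{t₁, t₂}`: the vertices of `G` incident both to an
edge on the `t₁` side and to an edge on the `t₂` side. -/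
def sep (B : BranchDecomp G) (t₁ t₂ : B.τ) : Set V :=
  {v | (∃ e ∈ B.side t₁ t₂, v ∈ (e : Sym2 V)) ∧
       (∃ e : G.edgeSet, e ∉ B.side t₁ t₂ ∧ v ∈ (e : Sym2 V))}

/-- A branch decomposition has width at most `w` if all separators have at most `w`
vertices. -/
def widthLE (B : BranchDecomp G) (w : ℕ) : Prop :=
  ∀ t₁ t₂, B.tree.Adj t₁ t₂ → (B.sep t₁ t₂).ncard ≤ w

end BranchDecomp

/-- The branchwidth of `G`: the least width of a branch decomposition of `G`. -/
noncomputable def branchWidth {V : Type} (G : SimpleGraph V) : ℕ :=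
  sInf {w | ∃ B : BranchDecomp G, B.widthLE w}

/-- A carving decomposition of a graph `G`: a tree whose leaves (vertices with a unique
neighbor) are in bijection with the vertices of `G`. -/
structure CarvingDecomp {V : Type} (G : SimpleGraph V) where
  τ : Type
  tree : SimpleGraph τ
  isTree : tree.IsTree
  leafEquiv : V ≃ {t : τ // ∃! s, tree.Adj t s}

namespace CarvingDecomp

variable {V : Type} {G : SimpleGraph V}

/-- The set of vertices of `G` whose leaves end up on the side of `t₁` after removing
the tree edge `{t₁, t₂}`. -/
def side (C : CarvingDecomp G) (t₁ t₂ : C.τ) : Set V :=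
  {v | (C.tree.deleteEdges {s(t₁, t₂)}).Reachable (C.leafEquiv v).val t₁}

/-- The number of edges of `G` crossing the bipartition of `V(G)` induced by the tree
edge `{t₁, t₂}`. -/
noncomputable def crossWidth (C : CarvingDecomp G) (t₁ t₂ : C.τ) : ℕ :=
  {e : Sym2 V | e ∈ G.edgeSet ∧
    ∃ u w, e = s(u, w) ∧ u ∈ C.side t₁ t₂ ∧ w ∉ C.side t₁ t₂}.ncard

/-- A carving decomposition has width at most `w` if at most `w` edges cross every
induced bipartition. -/
def widthLE (C : CarvingDecomp G) (w : ℕ) : Prop :=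
  ∀ t₁ t₂, C.tree.Adj t₁ t₂ → C.crossWidth t₁ t₂ ≤ w

end CarvingDecomp

/-- The carving width of `G`: the least width of a carving decomposition of `G`. -/
noncomputable def carvingWidth {V : Type} (G : SimpleGraph V) : ℕ :=
  sInf {w | ∃ C : CarvingDecomp G, C.widthLE w}

/-!
Each clause of `phi` is a clique of the primal graph, and subtrees of a tree have the Helly
property, so some bag `χ(t_C)` contains all variables of `C`. Hanging below `t_C` a new leaf
with bag `χ(t_C) ∪ {C}`, for every clause `C`, gives a tree decomposition of the incidence graph
whose bags are at most one vertex larger.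
-/

namespace SimpleGraph

variable {α : Type*} {G : SimpleGraph α}

lemma Connected.exists_isPath_of_induce {S : Set α} (hS : (G.induce S).Connected) {u v : α}
    (hu : u ∈ S) (hv : v ∈ S) : ∃ p : G.Walk u v, p.IsPath :=
  ⟨_, ((hS.preconnected ⟨u, hu⟩ ⟨v, hv⟩).map (Embedding.induce S).toHom).some.bypass_isPath⟩

lemma IsAcyclic.support_subset_of_induce_connected (hG : G.IsAcyclic) {S : Set α}
    (hS : (G.induce S).Connected) {u v : α} (hu : u ∈ S) (hv : v ∈ S) {p : G.Walk u v}
    (hp : p.IsPath) : ∀ x ∈ p.support, x ∈ S := by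
  obtain ⟨w⟩ := hS.preconnected ⟨u, hu⟩ ⟨v, hv⟩
  let q := w.map (Embedding.induce S).toHom
  have hpq : p = q.bypass :=
    congrArg Subtype.val ((hG.subsingleton_path u v).elim ⟨p, hp⟩ ⟨q.bypass, q.bypass_isPath⟩)
  intro x hx
  have hxq := q.support_bypass_subset_support (hpq ▸ hx)
  rw [Walk.support_map] at hxq
  obtain ⟨y, -, rfl⟩ := List.mem_map.mp hxq
  exact y.2

lemma Walk.exists_isPath_append_of_isPath {a b c : α} (p : G.Walk a b) (q : G.Walk b c)
    (hp : p.IsPath) (hq : q.IsPath) :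
    ∃ (m : α) (p₁ : G.Walk a m) (q₂ : G.Walk m c),
      p₁.support ⊆ p.support ∧ q₂.support ⊆ q.support ∧ (p₁.append q₂).IsPath := by
  induction p with
  | nil => exact ⟨_, nil, q, by simp, List.Subset.refl _, by simpa using hq⟩
  | @cons a a' b h p' ih =>
    by_cases ha : a ∈ q.support
    · exact ⟨a, nil, q.dropUntil a ha, by simp, q.support_dropUntil_subset_support ha,
        by simpa using hq.dropUntil ha⟩
    rw [cons_isPath_iff] at hp
    obtain ⟨m, p₁, q₂, hp₁, hq₂, hpath⟩ := ih q hp.1 hq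
    refine ⟨m, cons h p₁, q₂, ?_, hq₂, ?_⟩
    · simpa using List.cons_subset_cons a hp₁
    · rw [cons_append]
      refine hpath.cons fun hmem => ?_
      rcases (mem_support_append_iff _ _).mp hmem with hmem | hmem
      · exact hp.2 (hp₁ hmem)
      · exact ha (hq₂ hmem)

lemma IsAcyclic.inter_inter_nonempty (hG : G.IsAcyclic) {A B C : Set α}
    (hA : (G.induce A).Connected) (hB : (G.induce B).Connected) (hC : (G.induce C).Connected)
    {u v w : α} (hu : u ∈ A ∩ B) (hv : v ∈ B ∩ C) (hw : w ∈ A ∩ C) :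
    (A ∩ B ∩ C).Nonempty := by
  obtain ⟨p, hp⟩ := hB.exists_isPath_of_induce hu.2 hv.1
  obtain ⟨q, hq⟩ := hC.exists_isPath_of_induce hv.2 hw.2
  obtain ⟨m, p₁, q₂, hp₁, hq₂, hr⟩ := Walk.exists_isPath_append_of_isPath p q hp hq
  refine ⟨m, ⟨?_, ?_⟩, ?_⟩
  · exact hG.support_subset_of_induce_connected hA hu.1 hw.1 hr m
      ((Walk.mem_support_append_iff _ _).mpr (Or.inl p₁.end_mem_support))
  · exact hG.support_subset_of_induce_connected hB hu.2 hv.1 hp m (hp₁ p₁.end_mem_support)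
  · exact hG.support_subset_of_induce_connected hC hv.2 hw.2 hq m (hq₂ q₂.start_mem_support)

lemma IsAcyclic.induce_inter_connected (hG : G.IsAcyclic) {A B : Set α}
    (hA : (G.induce A).Connected) (hB : (G.induce B).Connected) (hAB : (A ∩ B).Nonempty) :
    (G.induce (A ∩ B)).Connected := by
  rw [connected_iff]
  refine ⟨?_, hAB.to_subtype⟩
  rintro ⟨x, hx⟩ ⟨y, hy⟩
  obtain ⟨p, hp⟩ := hA.exists_isPath_of_induce hx.1 hy.1
  have hpAB : ∀ z ∈ p.support, z ∈ A ∩ B := fun z hz =>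
    ⟨hG.support_subset_of_induce_connected hA hx.1 hy.1 hp z hz,
      hG.support_subset_of_induce_connected hB hx.2 hy.2 hp z hz⟩
  exact (p.induce (A ∩ B) hpAB).reachable

/-- Helly property of subtrees; the extra subtree `B` makes the induction on `s` go through. -/
lemma IsAcyclic.exists_mem_forall_mem_of_pairwise_inter_nonempty {ι : Type*} (hG : G.IsAcyclic)
    (A : ι → Set α) (s : Finset ι) {B : Set α} (hB : (G.induce B).Connected)
    (hA : ∀ i ∈ s, (G.induce (A i)).Connected) (hBA : ∀ i ∈ s, (B ∩ A i).Nonempty)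
    (hAA : ∀ i ∈ s, ∀ j ∈ s, (A i ∩ A j).Nonempty) : ∃ m ∈ B, ∀ i ∈ s, m ∈ A i := by
  induction s using Finset.induction_on generalizing B with
  | empty =>
    obtain ⟨⟨x, hx⟩⟩ := hB.nonempty
    exact ⟨x, hx, by simp⟩
  | @insert x s hx ih =>
    have mem_x := Finset.mem_insert_self x s
    have mem_s : ∀ {i}, i ∈ s → i ∈ insert x s := Finset.mem_insert_of_mem
    have hBx := hG.induce_inter_connected hB (hA x mem_x) (hBA x mem_x)
    obtain ⟨m, hm, hms⟩ := ih hBx (fun i hi => hA i (mem_s hi))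
      (fun i hi => by
        obtain ⟨u, hu⟩ := hBA x mem_x
        obtain ⟨v, hv⟩ := hAA x mem_x i (mem_s hi)
        obtain ⟨w, hw⟩ := hBA i (mem_s hi)
        exact hG.inter_inter_nonempty hB (hA x mem_x) (hA i (mem_s hi)) hu hv hw)
      (fun i hi j hj => hAA i (mem_s hi) j (mem_s hj))
    refine ⟨m, hm.1, fun i hi => ?_⟩
    rcases Finset.mem_insert.mp hi with rfl | hi
    exacts [hm.2, hms i hi]
variable {L : Type*}

def attachLeaves (G : SimpleGraph α) (f : L → α) : SimpleGraph (α ⊕ L) where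
  Adj
    | .inl a, .inl b => G.Adj a b
    | .inl a, .inr l => f l = a
    | .inr l, .inl a => f l = a
    | .inr _, .inr _ => False
  symm := ⟨by rintro (a | l) (b | l') h <;> simp_all [G.adj_comm]⟩
  loopless := ⟨by rintro (a | l) h <;> simp_all⟩

variable {f : L → α}

lemma neighborSet_attachLeaves_inr (l : L) :
    (G.attachLeaves f).neighborSet (.inr l) = {.inl (f l)} := by
  ext (a | l') <;> simp [attachLeaves, eq_comm]

lemma Connected.induce_attachLeaves_preimage {S : Set α} (hS : (G.induce S).Connected)
    (f : L → α) : ((G.attachLeaves f).induce (Sum.elim id f ⁻¹' S)).Connected := by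
  set S' := Sum.elim id f ⁻¹' S
  let ι : G.induce S →g (G.attachLeaves f).induce S' := ⟨fun a => ⟨.inl a, a.2⟩, id⟩
  have reachable_inl : ∀ x : S',
      ((G.attachLeaves f).induce S').Reachable x (ι ⟨Sum.elim id f x, x.2⟩) := by
    rintro ⟨a | l, hx⟩
    · rfl
    · exact Adj.reachable (show f l = f l from rfl)
  rw [connected_iff]
  refine ⟨fun x y => (reachable_inl x).trans ?_, ?_⟩
  · exact ((hS.preconnected _ _).map ι).trans (reachable_inl y).symm
  · obtain ⟨a⟩ := hS.nonempty
    exact ⟨ι a⟩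

/-- A cycle cannot pass through a leaf, so it lies in the copy of `G`. -/
lemma IsTree.attachLeaves (hG : G.IsTree) : (G.attachLeaves f).IsTree := by
  refine ⟨?_, fun v c hc => ?_⟩
  · have h := ((induceUnivIso G).connected_iff.mpr hG.connected).induce_attachLeaves_preimage f
    rw [Set.preimage_univ] at h
    exact (induceUnivIso _).connected_iff.mp h
  by_cases hleaf : ∃ l, Sum.inr l ∈ c.support
  · obtain ⟨l, hl⟩ := hleaf
    have hle := Set.ncard_le_ncard ((c.toSubgraph.neighborSet_subset _).trans
      (neighborSet_attachLeaves_inr l).le) (Set.finite_singleton _)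
    rw [hc.ncard_neighborSet_toSubgraph_eq_two hl, Set.ncard_singleton] at hle
    omega
  · let ι : G ↪g G.attachLeaves f := ⟨Function.Embedding.inl, Iff.rfl⟩
    have hs : ∀ x ∈ c.support, x ∈ Set.range ι := by
      rintro (a | l) hx
      exacts [⟨a, rfl⟩, absurd ⟨l, hx⟩ hleaf]
    have hc' : ((c.induce _ hs).map (Embedding.induce _).toHom).IsCycle := by
      rwa [Walk.map_induce]
    exact ι.isoInduceRange.isAcyclic_iff.mp hG.isAcyclic _
      ((Walk.isCycle_map_iff_of_injective Subtype.val_injective).mp hc')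

end SimpleGraph

lemma mem_image_fst_iff_occurs {V : Type} {C : Clause V} {x : V} :
    x ∈ C.image Prod.fst ↔ Occurs x C := by
  simp [Occurs, or_comm]

lemma isClique_primalGraph_image_fst {V : Type} {phi : Finset (Clause V)} {C : Clause V}
    (hC : C ∈ phi) : (primalGraph phi).IsClique (C.image Prod.fst : Set V) := by
  intro x hx y hy hxy
  rw [primalGraph, SimpleGraph.fromRel_adj]
  exact ⟨hxy, Or.inl ⟨C, hC, mem_image_fst_iff_occurs.mp hx, mem_image_fst_iff_occurs.mp hy⟩⟩

namespace TreeDecomp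

open SimpleGraph

variable {V : Type} {G : SimpleGraph V} {phi : Finset (Clause V)}

lemma exists_subset_bag_of_isClique (T : TreeDecomp G) {K : Finset V}
    (hK : G.IsClique (K : Set V)) : ∃ t, K ⊆ T.bag t := by
  have hpair : ∀ u ∈ K, ∀ v ∈ K, ({t | u ∈ T.bag t} ∩ {t | v ∈ T.bag t}).Nonempty := by
    intro u hu v hv
    obtain rfl | huv := eq_or_ne u v
    · obtain ⟨t, ht⟩ := T.bag_vertex u
      exact ⟨t, ht, ht⟩
    · exact T.bag_edge (hK hu hv huv)
  obtain ⟨t, -, ht⟩ := T.isTree.isAcyclic.exists_mem_forall_mem_of_pairwise_inter_nonempty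
    (fun v => {t | v ∈ T.bag t}) K ((induceUnivIso _).connected_iff.mpr T.isTree.connected)
    (fun v _ => T.bag_connected v) (fun v _ => by simpa [Set.Nonempty] using T.bag_vertex v) hpair
  exact ⟨t, ht⟩

def incidenceBag (T : TreeDecomp G) (f : {C // C ∈ phi} → T.τ) :
    T.τ ⊕ {C // C ∈ phi} → Finset (V ⊕ {C // C ∈ phi})
  | .inl t => (T.bag t).map .inl
  | .inr C => insert (.inr C) ((T.bag (f C)).map .inl)

def extendToIncidence (T : TreeDecomp G) (f : {C // C ∈ phi} → T.τ)
    (hf : ∀ C, C.1.image Prod.fst ⊆ T.bag (f C)) : TreeDecomp (incidenceGraph phi) where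
  τ := T.τ ⊕ {C // C ∈ phi}
  tree := T.tree.attachLeaves f
  isTree := T.isTree.attachLeaves
  bag := T.incidenceBag f
  bag_vertex := by
    rintro (v | C)
    · obtain ⟨t, ht⟩ := T.bag_vertex v
      exact ⟨.inl t, by simpa [incidenceBag] using ht⟩
    · exact ⟨.inr C, by simp [incidenceBag]⟩
  bag_edge := by
    rintro _ _ ⟨-, ⟨x, C, rfl, rfl, hx⟩ | ⟨x, C, rfl, rfl, hx⟩⟩ <;>
      have := hf C (mem_image_fst_iff_occurs.mpr hx) <;>
      exact ⟨.inr C, by simpa [incidenceBag] using this⟩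
  bag_connected := by
    rintro (v | C)
    · have hS : {t | .inl v ∈ T.incidenceBag f t} = Sum.elim id f ⁻¹' {t | v ∈ T.bag t} := by
        ext (t | C) <;> simp [incidenceBag]
      rw [hS]
      exact (T.bag_connected v).induce_attachLeaves_preimage f
    · have hS : {t | .inr C ∈ T.incidenceBag f t} = {.inr C} := by
        ext (t | C') <;> simp [incidenceBag, eq_comm]
      rw [hS, induce_singleton_eq_top]
      exact connected_top

lemma widthLE_extendToIncidence (T : TreeDecomp G) {f : {C // C ∈ phi} → T.τ}
    (hf : ∀ C, C.1.image Prod.fst ⊆ T.bag (f C)) {k : ℕ} (hT : T.widthLE k) :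
    (T.extendToIncidence f hf).widthLE (k + 1)
  | .inl t => by simpa [extendToIncidence, incidenceBag] using (hT t).trans (Nat.le_succ _)
  | .inr C => (Finset.card_insert_le _ _).trans (by simpa using Nat.succ_le_succ (hT (f C)))

end TreeDecomp

theorem incidence_treewidth_le_primal_treewidth_add_one_general
    {V : Type} (phi : Finset (Clause V)) (k : ℕ)
    (T : TreeDecomp (primalGraph phi)) (hT : T.widthLE k) :
    ∃ T' : TreeDecomp (incidenceGraph phi), T'.widthLE (k + 1) := by
  choose f hf using fun C : {C // C ∈ phi} =>
    T.exists_subset_bag_of_isClique (isClique_primalGraph_image_fst C.2)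
  exact ⟨T.extendToIncidence f hf, T.widthLE_extendToIncidence hf hT⟩

/-- if the primal graph of a CNF formula `phi` has treewidth `k` (i.e.
has a tree decomposition of width `k`), then the incidence graph of `phi` has treewidth
at most `k + 1` (i.e. has a tree decomposition of width `k + 1`). -/
theorem incidence_treewidth_le_primal_treewidth_add_one
    {V : Type} [Fintype V] (phi : Finset (Clause V)) (k : ℕ)
    (T : TreeDecomp (primalGraph phi)) (hT : T.widthLE k) :
    ∃ T' : TreeDecomp (incidenceGraph phi), T'.widthLE (k + 1) :=
  incidence_treewidth_le_primal_treewidth_add_one_general phi k T hT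
end
end

section
/- Contracting a path of degree-2 vertices does not increase carving width: if G' is obtained from G by contracting an edge one of whose endpoints has degree at most 2, then the carving width of G' is at most the carving width of G. -/
open scoped Classical

noncomputable section

/-- The graph obtained from `G` by contracting the edge `{u, v}`: the vertex `u` is
removed, and its remaining incident edges are transferred to `v`. -/
def contractEdge {V : Type} (G : SimpleGraph V) (u v : V) :
    SimpleGraph {x : V // x ≠ u} :=
  SimpleGraph.fromRel fun a b =>
    G.Adj a.val b.val ∨ (a.val = v ∧ G.Adj u b.val) ∨ (b.val = v ∧ G.Adj u a.val)

/-!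
The trees of a carving decomposition need not be finite, so every graph has one (a star with a
two-way infinite path attached to its centre) and the infimum defining the carving width is
attained. Take an optimal decomposition of `G` and attach a two-way infinite path to the leaf of
`u`: this makes that leaf an inner node without creating new leaves, so the leaves are those of
`V ∖ {u}`. The new tree edges separate nothing, and an old tree edge induces the old bipartition
with `u` removed. Across such a bipartition the contraction loses the edges at `u` and gains at
most one edge `vw`, where `w` is the other neighbour of `u`; if `vw` crosses, then so does `uv`
or `uw`.
-/

namespace SimpleGraph

variable {α β : Type*}

theorem Reachable.map_of_adj_reachable {G : SimpleGraph α} {H : SimpleGraph β} (f : α → β)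
    (hf : ∀ x y, G.Adj x y → H.Reachable (f x) (f y)) {x y : α} (h : G.Reachable x y) :
    H.Reachable (f x) (f y) := by
  obtain ⟨p⟩ := h
  induction p with
  | nil => rfl
  | cons hadj _ ih => exact (hf _ _ hadj).trans ih

theorem IsAcyclic.sum {G : SimpleGraph α} {H : SimpleGraph β} (hG : G.IsAcyclic)
    (hH : H.IsAcyclic) : (G ⊕g H).IsAcyclic := by
  rw [isAcyclic_iff_forall_adj_isBridge]
  rintro (p | p) (q | q) hpq
  · refine fun h => isAcyclic_iff_forall_adj_isBridge.mp hG (sum_adj_inl.mp hpq)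
      (h.map_of_adj_reachable (Sum.elim id fun _ => p) ?_)
    rintro (x | x) (y | y) hxy <;> simp at hxy ⊢
    exact Adj.reachable (by simpa using hxy)
  · simp at hpq
  · simp at hpq
  · refine fun h => isAcyclic_iff_forall_adj_isBridge.mp hH (sum_adj_inr.mp hpq)
      (h.map_of_adj_reachable (Sum.elim (fun _ => p) id) ?_)
    rintro (x | x) (y | y) hxy <;> simp at hxy ⊢
    exact Adj.reachable (by simpa using hxy)

theorem not_existsUnique_adj_of_adj {G : SimpleGraph α} {t x y : α} (hx : G.Adj t x)
    (hy : G.Adj t y) (hxy : x ≠ y) : ¬∃! s, G.Adj t s :=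
  fun ⟨_, _, hs⟩ => hxy ((hs x hx).trans (hs y hy).symm)

theorem existsUnique_adj_starGraph_of_ne {r x : α} (h : x ≠ r) :
    ∃! s, (starGraph r).Adj x s :=
  ⟨r, by simp [h], fun _ hs => (starGraph_adj.mp hs).2.resolve_left h⟩

theorem hasse_int_adj {m n : ℤ} : (hasse ℤ).Adj m n ↔ n = m + 1 ∨ m = n + 1 := by
  simp only [hasse_adj, Order.covBy_iff_add_one_eq]
  omega

theorem isTree_hasse_int : (hasse ℤ).IsTree := by
  refine ⟨⟨hasse_preconnected_of_succ ℤ⟩, isAcyclic_iff_forall_adj_isBridge.mpr ?_⟩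
  suffices h : ∀ n : ℤ, (hasse ℤ).IsBridge s(n, n + 1) by
    intro m n hmn
    rcases hasse_int_adj.mp hmn with rfl | rfl
    exacts [h m, Sym2.eq_swap ▸ h n]
  intro n hreach
  have key := hreach.map_of_adj_reachable (H := ⊥) (fun k => decide (k ≤ n)) fun x y hxy => by
    rw [deleteEdges_adj, hasse_int_adj] at hxy
    simp only [Set.mem_singleton_iff, Sym2.eq_iff] at hxy
    rw [reachable_bot, decide_eq_decide]
    omega
  simp [reachable_bot] at key

theorem hasse_int_not_existsUnique_adj (n : ℤ) : ¬∃! m, (hasse ℤ).Adj n m :=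
  not_existsUnique_adj_of_adj (x := n + 1) (y := n - 1) (by simp) (by simp)
    (by omega)

def attachLine (T : SimpleGraph α) (a : α) : SimpleGraph (α ⊕ ℤ) :=
  T.sum (hasse ℤ) ⊔ edge (.inl a) (.inr 0)

variable {T : SimpleGraph α} {a : α}

@[simp] theorem attachLine_adj_inl_inl {p q : α} :
    (T.attachLine a).Adj (.inl p) (.inl q) ↔ T.Adj p q := by
  simp [attachLine, edge_adj]

@[simp] theorem attachLine_adj_inr_inr {m n : ℤ} :
    (T.attachLine a).Adj (.inr m) (.inr n) ↔ (hasse ℤ).Adj m n := by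
  simp [attachLine, edge_adj]

@[simp] theorem attachLine_adj_inl_inr {p : α} {n : ℤ} :
    (T.attachLine a).Adj (.inl p) (.inr n) ↔ p = a ∧ n = 0 := by
  simp [attachLine, edge_adj]

@[simp] theorem attachLine_adj_inr_inl {p : α} {n : ℤ} :
    (T.attachLine a).Adj (.inr n) (.inl p) ↔ p = a ∧ n = 0 := by
  rw [adj_comm, attachLine_adj_inl_inr]

theorem IsTree.attachLine (hT : T.IsTree) : (T.attachLine a).IsTree :=
  ⟨hT.1.sum_sup_edge isTree_hasse_int.1,
    (hT.2.sum isTree_hasse_int.2).sup_edge_of_not_reachable (not_reachable_sum_inl_inr _ _)⟩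

theorem existsUnique_adj_attachLine_iff (ha : ∃ s, T.Adj a s) (t : α ⊕ ℤ) :
    (∃! s, (T.attachLine a).Adj t s) ↔ ∃ p, t = .inl p ∧ p ≠ a ∧ ∃! s, T.Adj p s := by
  obtain ⟨s₀, hs₀⟩ := ha
  rcases t with p | n
  · by_cases hp : p = a
    · subst hp
      simp only [Sum.inl.injEq, exists_eq_left', ne_eq, not_true_eq_false, false_and,
        iff_false]
      exact not_existsUnique_adj_of_adj (x := .inl s₀) (y := .inr 0) (by simpa) (by simp)
        (by simp)
    · simp [ExistsUnique, Sum.exists, Sum.forall, hp]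
  · simp only [reduceCtorEq, false_and, exists_false, iff_false]
    exact not_existsUnique_adj_of_adj (x := .inr (n + 1)) (y := .inr (n - 1))
      (by simp) (by simp) (by simp; omega)

def attachLineLeafEquiv (ha : ∃ s, T.Adj a s) :
    {p : {p // ∃! s, T.Adj p s} // p.1 ≠ a} ≃ {t // ∃! s, (T.attachLine a).Adj t s} :=
  Equiv.ofBijective
    (fun p => ⟨.inl p.1.1, (existsUnique_adj_attachLine_iff ha _).mpr ⟨_, rfl, p.2, p.1.2⟩⟩)
    ⟨fun p q h => by simpa [Subtype.ext_iff] using h, fun ⟨t, ht⟩ => by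
      obtain ⟨p, rfl, hpa, hp⟩ := (existsUnique_adj_attachLine_iff ha t).mp ht
      exact ⟨⟨⟨p, hp⟩, hpa⟩, rfl⟩⟩

theorem reachable_deleteEdges_attachLine_inl_iff {t₁ t₂ x y : α} :
    ((T.attachLine a).deleteEdges {s(.inl t₁, .inl t₂)}).Reachable (.inl x) (.inl y) ↔
      (T.deleteEdges {s(t₁, t₂)}).Reachable x y := by
  constructor
  · refine fun h => h.map_of_adj_reachable (Sum.elim id fun _ => a) ?_
    rintro (p | m) (q | n) hpq <;> simp at hpq ⊢
    · exact Adj.reachable (by simpa using hpq)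
    · rw [hpq.1]
    · rw [hpq.1]
  · refine fun h => h.map_of_adj_reachable Sum.inl fun p q hpq => Adj.reachable ?_
    simpa using hpq

theorem Connected.reachable_deleteEdges_attachLine_inl (hT : T.Connected) {e : Sym2 (α ⊕ ℤ)}
    (he : ∀ t₁ t₂, e ≠ s(.inl t₁, .inl t₂)) (x y : α) :
    ((T.attachLine a).deleteEdges {e}).Reachable (.inl x) (.inl y) :=
  (hT x y).map_of_adj_reachable Sum.inl fun p q hpq =>
    Adj.reachable (by simpa [hpq] using (he p q).symm)

variable {V : Type*} {G : SimpleGraph V} {A : Set V}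

def cut (G : SimpleGraph V) (A : Set V) : Set (Sym2 V) :=
  {e | e ∈ G.edgeSet ∧ ∃ a b, e = s(a, b) ∧ a ∈ A ∧ b ∉ A}

theorem cut_subset_edgeSet : G.cut A ⊆ G.edgeSet := fun _ he => he.1

theorem mk_mem_cut_iff {a b : V} : s(a, b) ∈ G.cut A ↔ G.Adj a b ∧ (a ∈ A ↔ b ∉ A) := by
  simp only [cut, Set.mem_ofPred_eq, mem_edgeSet, Sym2.eq_iff]
  constructor
  · rintro ⟨h, a', b', ⟨rfl, rfl⟩ | ⟨rfl, rfl⟩, ha, hb⟩ <;> tauto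
  · rintro ⟨h, hab⟩
    by_cases ha : a ∈ A
    · exact ⟨h, a, b, Or.inl ⟨rfl, rfl⟩, ha, hab.mp ha⟩
    · exact ⟨h, b, a, Or.inr ⟨rfl, rfl⟩, by tauto, ha⟩

end SimpleGraph

open SimpleGraph

section contractEdge

variable {V : Type} {G : SimpleGraph V} {u v : V} {A : Set V}

theorem contractEdge_adj {a b : {x : V // x ≠ u}} :
    (contractEdge G u v).Adj a b ↔
      a ≠ b ∧ (G.Adj a b ∨ (a.1 = v ∧ G.Adj u b) ∨ (b.1 = v ∧ G.Adj u a)) := by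
  simp only [contractEdge, fromRel_adj]
  constructor
  · rintro ⟨h, h' | h'⟩
    · exact ⟨h, h'⟩
    · exact ⟨h, by rcases h' with h' | h' | h' <;> tauto⟩
  · exact fun ⟨h, h'⟩ => ⟨h, Or.inl h'⟩

theorem image_cut_contractEdge_inter_edgeSet_subset :
    Sym2.map Subtype.val '' (contractEdge G u v).cut (Subtype.val ⁻¹' A) ∩ G.edgeSet ⊆
      G.cut A \ {e | u ∈ e} := by
  rintro _ ⟨⟨e, he, rfl⟩, hG⟩
  induction e using Sym2.ind with
  | _ a b =>
    rw [mk_mem_cut_iff] at he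
    simp only [Sym2.map_mk, mem_edgeSet] at hG ⊢
    refine ⟨mk_mem_cut_iff.mpr ⟨hG, he.2⟩, ?_⟩
    simp [Sym2.mem_iff, Ne.symm a.2, Ne.symm b.2]

theorem exists_of_mem_image_cut_contractEdge_diff_edgeSet {e : Sym2 V}
    (he : e ∈ Sym2.map Subtype.val '' (contractEdge G u v).cut (Subtype.val ⁻¹' A) \
      G.edgeSet) :
    ∃ w, G.Adj u w ∧ w ≠ v ∧ e = s(v, w) ∧ (v ∈ A ↔ w ∉ A) := by
  obtain ⟨⟨e, he, rfl⟩, hG⟩ := he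
  induction e using Sym2.ind with
  | _ a b =>
    rw [mk_mem_cut_iff, contractEdge_adj] at he
    obtain ⟨⟨hab, hadj⟩, hA⟩ := he
    have hab : a.1 ≠ b.1 := fun h => hab (Subtype.ext h)
    simp only [Sym2.map_mk, mem_edgeSet] at hG ⊢
    rcases hadj with h | ⟨rfl, h⟩ | ⟨rfl, h⟩
    · exact absurd h hG
    · exact ⟨b, h, hab.symm, rfl, hA⟩
    · exact ⟨a, h, hab, Sym2.eq_swap, by simp only [Set.mem_preimage] at hA; tauto⟩

theorem ncard_cut_contractEdge_le [Finite V] (huv : G.Adj u v)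
    (hdeg : (G.neighborSet u).ncard ≤ 2) (A : Set V) :
    ((contractEdge G u v).cut (Subtype.val ⁻¹' A)).ncard ≤ (G.cut A).ncard := by
  set S := Sym2.map Subtype.val '' (contractEdge G u v).cut (Subtype.val ⁻¹' A)
  have hnew : (S \ G.edgeSet).Subsingleton := by
    intro e₁ h₁ e₂ h₂
    obtain ⟨w₁, hw₁, hw₁v, rfl, -⟩ := exists_of_mem_image_cut_contractEdge_diff_edgeSet h₁
    obtain ⟨w₂, hw₂, hw₂v, rfl, -⟩ := exists_of_mem_image_cut_contractEdge_diff_edgeSet h₂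
    have hone : (G.neighborSet u \ {v}).ncard ≤ 1 := by
      rw [Set.ncard_sdiff_singleton_of_mem ((G.mem_neighborSet u v).mpr huv)]
      omega
    rw [Set.ncard_le_one_iff_subsingleton.mp hone ⟨hw₁, hw₁v⟩ ⟨hw₂, hw₂v⟩]
  have hnew_le : (S \ G.edgeSet).ncard ≤ (G.cut A ∩ {e | u ∈ e}).ncard := by
    rcases (S \ G.edgeSet).eq_empty_or_nonempty with h | ⟨e, he⟩
    · simp [h]
    obtain ⟨w, hw, -, -, hA⟩ := exists_of_mem_image_cut_contractEdge_diff_edgeSet he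
    have hu : (G.cut A ∩ {e | u ∈ e}).Nonempty := by
      by_cases huA : u ∈ A ↔ v ∈ A
      · exact ⟨s(u, w), mk_mem_cut_iff.mpr ⟨hw, by tauto⟩, Sym2.mem_mk_left _ _⟩
      · exact ⟨s(u, v), mk_mem_cut_iff.mpr ⟨huv, by tauto⟩, Sym2.mem_mk_left _ _⟩
    exact (Set.ncard_le_one_iff_subsingleton.mpr hnew).trans ((Set.ncard_pos).mpr hu)
  calc ((contractEdge G u v).cut (Subtype.val ⁻¹' A)).ncard = S.ncard :=
        (Set.ncard_image_of_injective _ (Sym2.map.injective Subtype.val_injective)).symm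
    _ = (S ∩ G.edgeSet).ncard + (S \ G.edgeSet).ncard :=
        (Set.ncard_inter_add_ncard_sdiff_eq_ncard _ _).symm
    _ ≤ (G.cut A \ {e | u ∈ e}).ncard + (G.cut A ∩ {e | u ∈ e}).ncard :=
        add_le_add (Set.ncard_le_ncard image_cut_contractEdge_inter_edgeSet_subset) hnew_le
    _ = (G.cut A).ncard := by rw [add_comm, Set.ncard_inter_add_ncard_sdiff_eq_ncard]

end contractEdge

namespace CarvingDecomp

variable {V : Type} {G : SimpleGraph V}

theorem crossWidth_eq_ncard_cut (C : CarvingDecomp G) (t₁ t₂ : C.τ) :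
    C.crossWidth t₁ t₂ = (G.cut (C.side t₁ t₂)).ncard := rfl

theorem crossWidth_eq_zero_of_reachable (C : CarvingDecomp G) {t₁ t₂ : C.τ}
    (h : ∀ x y, (C.tree.deleteEdges {s(t₁, t₂)}).Reachable (C.leafEquiv x) (C.leafEquiv y)) :
    C.crossWidth t₁ t₂ = 0 := by
  suffices hcut : G.cut (C.side t₁ t₂) = ∅ by rw [crossWidth_eq_ncard_cut, hcut, Set.ncard_empty]
  exact Set.eq_empty_of_forall_notMem fun _ ⟨_, a, b, _, ha, hb⟩ => hb ((h b a).trans ha)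

theorem widthLE_ncard_edgeSet [Finite V] (C : CarvingDecomp G) :
    C.widthLE G.edgeSet.ncard :=
  fun _ _ _ => Set.ncard_le_ncard cut_subset_edgeSet

theorem nonempty (G : SimpleGraph V) : Nonempty (CarvingDecomp G) := by
  rcases isEmpty_or_nonempty V with hV | ⟨⟨x₀⟩⟩
  · have : IsEmpty {t : ℤ // ∃! s, (hasse ℤ).Adj t s} :=
      ⟨fun t => hasse_int_not_existsUnique_adj t.1 t.2⟩
    exact ⟨⟨ℤ, hasse ℤ, isTree_hasse_int, Equiv.equivOfIsEmpty _ _⟩⟩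
  -- the line keeps the centre `none` from being a leaf when `V` has a single vertex
  have hnone : ∃ s, (starGraph (none : Option V)).Adj none s := ⟨some x₀, by simp⟩
  refine ⟨⟨Option V ⊕ ℤ, (starGraph none).attachLine none, (isTree_starGraph _).attachLine,
    Equiv.trans ?_ (attachLineLeafEquiv hnone)⟩⟩
  refine Equiv.ofBijective (fun x => ⟨⟨some x, existsUnique_adj_starGraph_of_ne
    (Option.some_ne_none x)⟩, Option.some_ne_none x⟩) ⟨fun x y h => by simpa using h, ?_⟩
  rintro ⟨⟨o, _⟩, ho⟩
  obtain ⟨x, rfl⟩ := Option.ne_none_iff_exists'.mp ho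
  exact ⟨x, rfl⟩

def eraseLeaf (C : CarvingDecomp G) (u : V) (G' : SimpleGraph {x // x ≠ u}) :
    CarvingDecomp G' where
  τ := C.τ ⊕ ℤ
  tree := C.tree.attachLine (C.leafEquiv u)
  isTree := C.isTree.attachLine
  leafEquiv := (C.leafEquiv.subtypeEquiv fun _ =>
      C.leafEquiv.injective.ne_iff.symm.trans Subtype.coe_injective.ne_iff.symm).trans
    (attachLineLeafEquiv (C.leafEquiv u).2.exists)

variable {u : V} {G' : SimpleGraph {x // x ≠ u}}

theorem side_eraseLeaf_inl (C : CarvingDecomp G) (t₁ t₂ : C.τ) :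
    (C.eraseLeaf u G').side (.inl t₁) (.inl t₂) = Subtype.val ⁻¹' C.side t₁ t₂ :=
  Set.ext fun _ => reachable_deleteEdges_attachLine_inl_iff

theorem widthLE_eraseLeaf {C : CarvingDecomp G} {w : ℕ}
    (hcut : ∀ A, (G'.cut (Subtype.val ⁻¹' A)).ncard ≤ (G.cut A).ncard) (hC : C.widthLE w) :
    (C.eraseLeaf u G').widthLE w := by
  rintro (t₁ | n) (t₂ | m) hadj
  · exact (congrArg (fun A => (G'.cut A).ncard) (side_eraseLeaf_inl C t₁ t₂)).trans_le
      ((hcut _).trans (hC _ _ (attachLine_adj_inl_inl.mp hadj)))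
  all_goals
    refine (crossWidth_eq_zero_of_reachable _ fun x y => ?_).trans_le (Nat.zero_le w)
    exact C.isTree.1.reachable_deleteEdges_attachLine_inl
      (fun _ _ h => by cases Sym2.eq_iff.mp h <;> simp_all) _ _

end CarvingDecomp

theorem exists_widthLE_carvingWidth {V : Type} [Finite V] (G : SimpleGraph V) :
    ∃ C : CarvingDecomp G, C.widthLE (carvingWidth G) :=
  Nat.sInf_mem (s := {w | ∃ C : CarvingDecomp G, C.widthLE w})
    ⟨_, (CarvingDecomp.nonempty G).some, CarvingDecomp.widthLE_ncard_edgeSet _⟩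

/-- contracting an edge one of whose endpoints has degree at most 2 does
not increase the carving width. -/
theorem carvingWidth_contract_degree_two
    {V : Type} [Fintype V] (G : SimpleGraph V) (u v : V)
    (huv : G.Adj u v) (hdeg : (G.neighborSet u).ncard ≤ 2) :
    carvingWidth (contractEdge G u v) ≤ carvingWidth G := by
  obtain ⟨C, hC⟩ := exists_widthLE_carvingWidth G
  exact Nat.sInf_le ⟨C.eraseLeaf u _, C.widthLE_eraseLeaf (ncard_cut_contractEdge_le huv hdeg) hC⟩
end
end

section
/- Let N be a tensor network and η an assignment to a subset I of the bond indices of N. If T is a contraction tree for N witnessing that every intermediate tensor arising in the recursive contraction has rank at most r, then the same tree structure applied to the sliced network N[η] yields intermediate tensors of rank at most r, and more precisely each intermediate tensor in the sliced contraction is the η-slice-compatible projection with index set equal to the original intermediate index set minus I. -/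
open scoped Classical

noncomputable section

/-- The `η`-slice of a tensor: fix the indices in `I` according to `η`. -/
def Tensor.slice {Ind : Type} {D : Ind → Type} (A : Tensor Ind D)
    (I : Finset Ind) (η : ∀ i : I, D i) : Tensor Ind D where
  idx := A.idx \ I
  val σ := A.val (Tensor.override σ η)
  depends σ τ h := A.depends _ _ (by
    intro i hi
    unfold Tensor.override
    by_cases hI : i ∈ I
    · simp [hI]
    · simp only [dif_neg hI]
      exact h i (Finset.mem_sdiff.mpr ⟨hi, hI⟩))

/-- A contraction tree: a rooted binary tree whose leaves are tensors. -/
inductive CTree (Ind : Type) (D : Ind → Type) : Type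
  | leaf : Tensor Ind D → CTree Ind D
  | node : CTree Ind D → CTree Ind D → CTree Ind D

namespace CTree

variable {Ind : Type} {D : Ind → Type}

/-- The list of leaf tensors of a contraction tree. -/
def leaves : CTree Ind D → List (Tensor Ind D)
  | .leaf A => [A]
  | .node l r => l.leaves ++ r.leaves

/-- Recursive contraction along a contraction tree: a single tensor at a leaf, and the
binary contraction of the results of the two immediate subtrees at a node. -/
def eval [∀ i, Fintype (D i)] : CTree Ind D → Tensor Ind D
  | .leaf A => A
  | .node l r => Tensor.binContract l.eval r.eval

/-- The list of all subtrees of a contraction tree (whose evaluations are exactly the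
tensors appearing during the recursive contraction). -/
def subtrees : CTree Ind D → List (CTree Ind D)
  | .leaf A => [.leaf A]
  | .node l r => .node l r :: (l.subtrees ++ r.subtrees)

/-- The family of leaf tensors of a contraction tree, indexed by leaf position. -/
def leafFamily (T : CTree Ind D) : Fin T.leaves.length → Tensor Ind D :=
  fun k => T.leaves.get k

end CTree

/-- Apply a tensor transformation to every leaf of a contraction tree. -/
def CTree.map {Ind : Type} {D : Ind → Type}
    (f : Tensor Ind D → Tensor Ind D) : CTree Ind D → CTree Ind D
  | .leaf A => .leaf (f A)
  | .node l r => .node (CTree.map f l) (CTree.map f r)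


lemma sliced_eval_idx
    {Ind : Type} {D : Ind → Type} [∀ i, Fintype (D i)]
    (I : Finset Ind) (η : ∀ i : (I : Finset Ind), D i) :
    ∀ S : CTree Ind D,
      ((CTree.map (fun A => A.slice I η) S).eval).idx = S.eval.idx \ I := by
  intro S
  induction S with
  | leaf A => rfl
  | node l r ihl ihr =>
      show (Tensor.binContract _ _).idx = (Tensor.binContract _ _).idx \ I
      simp only [Tensor.binContract, ihl, ihr]
      ext i
      simp only [Finset.mem_union, Finset.mem_sdiff]
      tauto

/-- slicing preserves contraction-tree structure and ranks.  Let `N` be a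
tensor network with contraction tree `T`, `I` a subset of the bond indices of `N`, and
`η` an assignment of `I`.  If every intermediate tensor arising in the recursive
contraction along `T` has rank at most `r`, then applying the same tree structure to the
sliced network `N[η]` yields intermediate tensors whose index set is exactly the
original intermediate index set minus `I`; in particular each has rank at most `r`. -/
theorem sliced_ctree_rank
    {Ind : Type} {D : Ind → Type} [∀ i, Fintype (D i)]
    (T : CTree Ind D)
    (hnet : Tensor.IsNetwork T.leafFamily)
    (I : Finset Ind) (hI : I ⊆ Tensor.bonds T.leafFamily)
    (η : ∀ i : (I : Finset Ind), D i)
    (r : ℕ)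
    (hr : ∀ S ∈ T.subtrees, S.eval.idx.card ≤ r) :
    (∀ S ∈ T.subtrees,
        ((CTree.map (fun A => A.slice I η) S).eval).idx = S.eval.idx \ I)
      ∧ ∀ S ∈ T.subtrees,
          ((CTree.map (fun A => A.slice I η) S).eval).idx.card ≤ r := by
  refine ⟨fun S _ => sliced_eval_idx I η S, fun S hS => ?_⟩
  rw [sliced_eval_idx I η S]
  exact le_trans (Finset.card_le_card (Finset.sdiff_subset)) (hr S hS)
end
end
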